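/- arXiv:2212.12277 — 5 statements merged into one kernel-verified Lean document; each statement's English description precedes it below -/
import Mathlib

section
/- Let (n,k,r) be an admissible triple of parameters. Then the expectation of an r-Lah distributed random variable satisfies E[Lah(n,k)_r] = (k(n+2r)/(n-(k-1)))·Σ_{i=1}^{n-k+1} 1/(k+2r-1+i) + r·Σ_{i=1}^{n-k} 1/(k+2r-1+i), and equivalently E[Lah(n,k)_r] = (k + [k(n+r)+r(n+1)]·Σ_{i=1}^{n-k} 1/(k+2r-1+i))/(n-(k-1)). Here E[Lah(n,k)_r] = Σ_{j=k}^n j·⌈n,j⌉_r·⦃j,k⦄_r / L(n,k)_r. -/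
/-
Separate the parameters of the two kinds: L(n,k)_{r,s} = ∑_j ⌈n,j⌉_r ⦃j,k⦄_s satisfies
L(n+1,k) = (n+k+r+s) L(n,k) + L(n,k-1), whence L(n,k)_{r,s} = C(n,k) ∏_{m=k}^{n-1} (m+r+s).
Since ∂_s ⦃j,k⦄_s = j ⦃j-1,k⦄_s, the recurrence j⦃j,k⦄_s = (k+s) j⦃j-1,k⦄_s + j⦃j-1,k-1⦄_s
expresses the first moment ∑_j j ⌈n,j⌉_r ⦃j,k⦄_s through ∂_s L(n,k) and ∂_s L(n,k-1), that is,
through the logarithmic derivative ∑_{m=k}^{n-1} 1/(m+r+s) of the product. Then put s = r.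
-/

open Finset Filter MeasureTheory

/-- r-Stirling numbers of the first kind. -/
noncomputable def stirFir (r : ℝ) : ℕ → ℕ → ℝ
  | 0, 0 => 1
  | 0, _ + 1 => 0
  | n + 1, 0 => ((n : ℝ) + r) * stirFir r n 0
  | n + 1, k + 1 => ((n : ℝ) + r) * stirFir r n (k + 1) + stirFir r n k

/-- r-Stirling numbers of the second kind. -/
noncomputable def stirSec (r : ℝ) : ℕ → ℕ → ℝ
  | 0, 0 => 1
  | 0, _ + 1 => 0
  | n + 1, 0 => r * stirSec r n 0
  | n + 1, k + 1 => ((k : ℝ) + 1 + r) * stirSec r n (k + 1) + stirSec r n k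

/-- The r-Lah number L(n,k)_r. -/
noncomputable def lahNum (r : ℝ) (n k : ℕ) : ℝ :=
  ∑ j ∈ Finset.Icc k n, stirFir r n j * stirSec r j k

/-- The probability mass function of the r-Lah distribution. -/
noncomputable def lahPMF (r : ℝ) (n k j : ℕ) : ℝ :=
  stirFir r n j * stirSec r j k / lahNum r n k

/-- The expectation of the r-Lah distribution. -/
noncomputable def lahExp (r : ℝ) (n k : ℕ) : ℝ :=
  (∑ j ∈ Finset.Icc k n, (j : ℝ) * stirFir r n j * stirSec r j k) / lahNum r n k

theorem deriv_prod_add {ι : Type*} (I : Finset ι) (a : ι → ℝ) {x : ℝ}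
    (h : ∀ i ∈ I, a i + x ≠ 0) :
    deriv (fun t => ∏ i ∈ I, (a i + t)) x = (∏ i ∈ I, (a i + x)) * ∑ i ∈ I, 1 / (a i + x) := by
  have hlog := logDeriv_prod (f := fun i t => a i + t) h (fun i _ => by fun_prop)
  rw [logDeriv_apply, div_eq_iff (prod_ne_zero_iff.mpr h)] at hlog
  rw [hlog, mul_comm]
  simp [logDeriv_apply, one_div]

lemma sub_mul_choose_eq_succ_mul_choose_succ {n k : ℕ} (hk : k < n) :
    ((n : ℝ) - k) * n.choose k = (k + 1) * n.choose (k + 1) := by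
  have h := congrArg (Nat.cast (R := ℝ)) (Nat.choose_succ_right_eq n k)
  push_cast [Nat.cast_sub hk.le] at h
  linear_combination -h

lemma stirFir_eq_zero_of_lt (r : ℝ) {n k : ℕ} (h : n < k) : stirFir r n k = 0 := by
  induction n generalizing k with
  | zero => obtain ⟨k, rfl⟩ := Nat.exists_eq_add_one.mpr h; rfl
  | succ n ih =>
    obtain ⟨k, rfl⟩ := Nat.exists_eq_add_one.mpr (Nat.zero_lt_of_lt h)
    rw [stirFir, ih (by omega), ih (by omega), mul_zero, add_zero]

lemma stirSec_eq_zero_of_lt (s : ℝ) {n k : ℕ} (h : n < k) : stirSec s n k = 0 := by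
  induction n generalizing k with
  | zero => obtain ⟨k, rfl⟩ := Nat.exists_eq_add_one.mpr h; rfl
  | succ n ih =>
    obtain ⟨k, rfl⟩ := Nat.exists_eq_add_one.mpr (Nat.zero_lt_of_lt h)
    rw [stirSec, ih (by omega), ih (by omega), mul_zero, add_zero]

lemma natCast_mul_stirSec_zero (s : ℝ) (n : ℕ) :
    (n : ℝ) * stirSec s n 0 = s * (n * stirSec s (n - 1) 0) := by
  cases n with
  | zero => simp
  | succ n => rw [stirSec, Nat.add_sub_cancel]; ring

lemma natCast_mul_stirSec_succ (s : ℝ) (n k : ℕ) :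
    (n : ℝ) * stirSec s n (k + 1) =
      (k + 1 + s) * (n * stirSec s (n - 1) (k + 1)) + n * stirSec s (n - 1) k := by
  cases n with
  | zero => simp
  | succ n => rw [stirSec, Nat.add_sub_cancel]; ring

theorem hasDerivAt_stirSec (n k : ℕ) (s : ℝ) :
    HasDerivAt (fun t => stirSec t n k) (n * stirSec s (n - 1) k) s := by
  induction n generalizing k with
  | zero => cases k <;> simpa [stirSec] using hasDerivAt_const s _
  | succ n ih =>
    cases k with
    | zero =>
      refine ((hasDerivAt_id' s).mul (ih 0)).congr_deriv ?_
      rw [Nat.add_sub_cancel, Nat.cast_succ]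
      linear_combination -natCast_mul_stirSec_zero s n
    | succ k =>
      refine ((((hasDerivAt_id' s).const_add ((k : ℝ) + 1)).mul (ih (k + 1))).add
        (ih k)).congr_deriv ?_
      rw [Nat.add_sub_cancel, Nat.cast_succ]
      linear_combination -natCast_mul_stirSec_succ s n k

lemma sum_mul_stirFir_succ (r : ℝ) (n : ℕ) (g : ℕ → ℝ) :
    ∑ j ∈ range (n + 2), stirFir r (n + 1) j * g j =
      (n + r) * ∑ j ∈ range (n + 1), stirFir r n j * g j +
        ∑ j ∈ range (n + 1), stirFir r n j * g (j + 1) := by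
  have htop : ∑ j ∈ range (n + 1), stirFir r n j * g j =
      ∑ j ∈ range (n + 1), stirFir r n (j + 1) * g (j + 1) + stirFir r n 0 * g 0 := by
    rw [← sum_range_succ' (fun j => stirFir r n j * g j), sum_range_succ _ (n + 1),
      stirFir_eq_zero_of_lt r (Nat.lt_succ_self n), zero_mul, add_zero]
  rw [sum_range_succ', htop, mul_add, mul_sum]
  simp only [stirFir, add_mul, sum_add_distrib, mul_assoc]
  ring

noncomputable def lahNum₂ (r s : ℝ) (n k : ℕ) : ℝ :=
  ∑ j ∈ range (n + 1), stirFir r n j * stirSec s j k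

lemma lahNum₂_succ_zero (r s : ℝ) (n : ℕ) :
    lahNum₂ r s (n + 1) 0 = (n + r + s) * lahNum₂ r s n 0 := by
  simp only [lahNum₂, sum_mul_stirFir_succ, stirSec, mul_left_comm _ s, ← mul_sum]
  ring

lemma lahNum₂_succ_succ (r s : ℝ) (n k : ℕ) :
    lahNum₂ r s (n + 1) (k + 1) =
      (n + k + 1 + r + s) * lahNum₂ r s n (k + 1) + lahNum₂ r s n k := by
  simp only [lahNum₂, sum_mul_stirFir_succ, stirSec, mul_add, sum_add_distrib,
    mul_left_comm _ ((k : ℝ) + 1 + s), ← mul_sum]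
  ring

theorem lahNum₂_eq_choose_mul_prod (r s : ℝ) (n k : ℕ) :
    lahNum₂ r s n k = n.choose k * ∏ m ∈ Ico k n, ((m : ℝ) + r + s) := by
  induction n generalizing k with
  | zero => cases k <;> simp [lahNum₂, stirFir, stirSec]
  | succ n ih =>
    cases k with
    | zero =>
      rw [lahNum₂_succ_zero, ih, prod_Ico_succ_top n.zero_le]
      simp only [Nat.choose_zero_right, Nat.cast_one]
      ring
    | succ k =>
      rw [lahNum₂_succ_succ, ih, ih]
      rcases lt_trichotomy k n with hkn | rfl | hnk
      · rw [prod_eq_prod_Ico_succ_bot hkn, prod_Ico_succ_top hkn, Nat.choose_succ_succ,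
          Nat.cast_add]
        linear_combination -(∏ m ∈ Ico (k + 1) n, ((m : ℝ) + r + s)) *
          sub_mul_choose_eq_succ_mul_choose_succ hkn
      · simp
      · simp [Nat.choose_eq_zero_of_lt, hnk, Nat.lt_succ_of_lt hnk]

theorem hasDerivAt_lahNum₂ (r : ℝ) (n k : ℕ) (s : ℝ) :
    HasDerivAt (fun t => lahNum₂ r t n k)
      (∑ j ∈ range (n + 1), stirFir r n j * (j * stirSec s (j - 1) k)) s :=
  HasDerivAt.fun_sum fun j _ => (hasDerivAt_stirSec j k s).const_mul _

noncomputable def lahMoment₂ (r s : ℝ) (n k : ℕ) : ℝ :=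
  ∑ j ∈ range (n + 1), (j : ℝ) * stirFir r n j * stirSec s j k

lemma lahMoment₂_zero (r s : ℝ) (n : ℕ) :
    lahMoment₂ r s n 0 = s * deriv (fun t => lahNum₂ r t n 0) s := by
  rw [(hasDerivAt_lahNum₂ r n 0 s).deriv, mul_sum]
  refine sum_congr rfl fun j _ => ?_
  rw [mul_comm (j : ℝ), mul_assoc, natCast_mul_stirSec_zero]
  ring

lemma lahMoment₂_succ (r s : ℝ) (n k : ℕ) :
    lahMoment₂ r s n (k + 1) =
      (k + 1 + s) * deriv (fun t => lahNum₂ r t n (k + 1)) s +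
        deriv (fun t => lahNum₂ r t n k) s := by
  rw [(hasDerivAt_lahNum₂ r n _ s).deriv, (hasDerivAt_lahNum₂ r n _ s).deriv, mul_sum,
    ← sum_add_distrib]
  refine sum_congr rfl fun j _ => ?_
  rw [mul_comm (j : ℝ), mul_assoc, natCast_mul_stirSec_succ]
  ring

lemma deriv_lahNum₂ (r s : ℝ) (n k : ℕ) :
    deriv (fun t => lahNum₂ r t n k) s =
      n.choose k * deriv (fun t => ∏ m ∈ Ico k n, ((m : ℝ) + r + t)) s := by
  simp_rw [lahNum₂_eq_choose_mul_prod]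
  exact deriv_const_mul _ (by fun_prop)

lemma deriv_prod_Ico_succ_bot (r s : ℝ) {n k : ℕ} (hk : k < n) :
    deriv (fun t => ∏ m ∈ Ico k n, ((m : ℝ) + r + t)) s =
      ∏ m ∈ Ico (k + 1) n, ((m : ℝ) + r + s) +
        (k + r + s) * deriv (fun t => ∏ m ∈ Ico (k + 1) n, ((m : ℝ) + r + t)) s := by
  simp_rw [prod_eq_prod_Ico_succ_bot hk]
  rw [deriv_fun_mul (by fun_prop) (by fun_prop)]
  simp

theorem sub_add_one_mul_lahMoment₂ (r s : ℝ) {n k : ℕ} (hk : k ≤ n) (hpos : 0 < k + r + s) :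
    ((n : ℝ) - k + 1) * lahMoment₂ r s n k =
      lahNum₂ r s n k * (k + ((k + s) * (n - k + 1) + k * (k - 1 + r + s)) *
        ∑ m ∈ Ico k n, 1 / ((m : ℝ) + r + s)) := by
  set P := ∏ m ∈ Ico k n, ((m : ℝ) + r + s)
  set H := ∑ m ∈ Ico k n, 1 / ((m : ℝ) + r + s)
  have hP : deriv (fun t => ∏ m ∈ Ico k n, ((m : ℝ) + r + t)) s = P * H := by
    refine deriv_prod_add _ _ fun m hm => ?_
    have : (k : ℝ) ≤ m := by exact_mod_cast (mem_Ico.mp hm).1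
    linarith
  rw [lahNum₂_eq_choose_mul_prod]
  cases k with
  | zero =>
    rw [lahMoment₂_zero, deriv_lahNum₂, hP]
    push_cast
    ring
  | succ k =>
    rw [lahMoment₂_succ, deriv_lahNum₂, deriv_lahNum₂, deriv_prod_Ico_succ_bot r s hk, hP]
    push_cast
    linear_combination P * (1 + (k + r + s) * H) * sub_mul_choose_eq_succ_mul_choose_succ hk

lemma lahNum₂_pos (r s : ℝ) {n k : ℕ} (hk : k ≤ n) (hpos : 0 < k + r + s) :
    0 < lahNum₂ r s n k := by
  rw [lahNum₂_eq_choose_mul_prod]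
  refine mul_pos (Nat.cast_pos.mpr (Nat.choose_pos hk)) (prod_pos fun m hm => ?_)
  have : (k : ℝ) ≤ m := by exact_mod_cast (mem_Ico.mp hm).1
  linarith

lemma sum_Icc_mul_stirSec (s : ℝ) (n k : ℕ) (f : ℕ → ℝ) :
    ∑ j ∈ Icc k n, f j * stirSec s j k = ∑ j ∈ range (n + 1), f j * stirSec s j k := by
  refine sum_subset (fun j hj => ?_) (fun j hj hjk => ?_)
  · simp only [mem_Icc, mem_range] at hj ⊢
    omega
  · simp only [mem_Icc, mem_range, not_and, not_le] at hj hjk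
    rw [stirSec_eq_zero_of_lt s (by omega), mul_zero]

lemma lahExp_eq_lahMoment₂_div (r : ℝ) (n k : ℕ) :
    lahExp r n k = lahMoment₂ r r n k / lahNum₂ r r n k := by
  rw [lahExp, lahNum, lahMoment₂, lahNum₂, sum_Icc_mul_stirSec, sum_Icc_mul_stirSec]

theorem expectation_rLah (n k : ℕ) (r : ℝ) (hn : 1 ≤ n) (hk : k ≤ n)
    (hr : 0 ≤ r) (hmax : 0 < k ∨ 0 < r) :
    lahExp r n k =
      ((k : ℝ) * ((n : ℝ) + 2 * r) / ((n : ℝ) - (k : ℝ) + 1)) *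
        (∑ i ∈ Finset.Icc 1 (n - k + 1), 1 / ((k : ℝ) + 2 * r - 1 + (i : ℝ))) +
      r * ∑ i ∈ Finset.Icc 1 (n - k), 1 / ((k : ℝ) + 2 * r - 1 + (i : ℝ)) ∧
    lahExp r n k =
      ((k : ℝ) + ((k : ℝ) * ((n : ℝ) + r) + r * ((n : ℝ) + 1)) *
        ∑ i ∈ Finset.Icc 1 (n - k), 1 / ((k : ℝ) + 2 * r - 1 + (i : ℝ))) /
      ((n : ℝ) - (k : ℝ) + 1) := by
  have hkn : (k : ℝ) ≤ n := by exact_mod_cast hk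
  have hn' : (1 : ℝ) ≤ n := by exact_mod_cast hn
  have hd : (n : ℝ) - k + 1 ≠ 0 := by linarith
  have hd' : (n : ℝ) + 2 * r ≠ 0 := by linarith
  have hpos : 0 < (k : ℝ) + r + r := by
    rcases hmax with h | h
    · have : (1 : ℝ) ≤ k := by exact_mod_cast h
      linarith
    · positivity
  have hH : ∑ i ∈ Icc 1 (n - k), 1 / ((k : ℝ) + 2 * r - 1 + i) =
      ∑ m ∈ Ico k n, 1 / ((m : ℝ) + r + r) := by
    rw [sum_Ico_eq_sum_range, ← Ico_add_one_right_eq_Icc, sum_Ico_eq_sum_range]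
    refine sum_congr (by simp) fun m _ => ?_
    push_cast
    ring_nf
  have hH_succ : ∑ i ∈ Icc 1 (n - k + 1), 1 / ((k : ℝ) + 2 * r - 1 + i) =
      ∑ i ∈ Icc 1 (n - k), 1 / ((k : ℝ) + 2 * r - 1 + i) + 1 / (n + 2 * r) := by
    rw [sum_Icc_succ_top (by omega), Nat.cast_add_one, Nat.cast_sub hk]
    ring_nf
  have hmean : lahExp r n k = ((k : ℝ) + ((k : ℝ) * ((n : ℝ) + r) + r * ((n : ℝ) + 1)) *
      ∑ i ∈ Icc 1 (n - k), 1 / ((k : ℝ) + 2 * r - 1 + (i : ℝ))) / ((n : ℝ) - (k : ℝ) + 1) := by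
    rw [lahExp_eq_lahMoment₂_div, hH, div_eq_div_iff (lahNum₂_pos r r hk hpos).ne' hd]
    linear_combination sub_add_one_mul_lahMoment₂ r r hk hpos
  refine ⟨?_, hmean⟩
  rw [hmean, hH_succ]
  field_simp
  ring
end

section
/- For every integer z ≥ 1 and every real number ν > z - 1, one has Σ_{m=1}^{z} C(ν, z-m)·(-1)^{m-1}/m = C(ν, z) · Σ_{i=0}^{z-1} 1/(ν - i), where C(ν, j) := ν(ν-1)⋯(ν-j+1)/j! denotes the generalized binomial coefficient for real ν and j ∈ ℕ. -/
/-! Both sides are the derivative of `C(ν, z)` in `ν`: the left one is the coefficient of `x ^ z` in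
`∂_ν (1 + x) ^ ν = (1 + x) ^ ν log (1 + x)`, the right one is `C(ν, z)` times the logarithmic
derivative of `ν (ν - 1) ⋯ (ν - z + 1)`. Without derivatives: both satisfy
`(z + 1) u (z + 1) = (ν - z) u z + C(ν, z)`. For the left side, split the weight `z + 1 = k + m` in
the Cauchy product `∑_{k + m = z + 1} C(ν, k) (-1) ^ (m - 1) / m`, shift the `k`-part with
`(k + 1) C(ν, k + 1) = (ν - k) C(ν, k)`, and note that the `m`-part produces two consecutive
alternating sums `∑_{k + m = n} C(ν, k) (-1) ^ m`, which add up to `C(ν, z)`. -/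

open Finset Filter MeasureTheory

/-- Generalized binomial coefficient for real upper argument. -/
noncomputable def genChoose (ν : ℝ) (j : ℕ) : ℝ :=
  (∏ i ∈ Finset.range j, (ν - (i : ℝ))) / (j.factorial : ℝ)

lemma genChoose_zero (ν : ℝ) : genChoose ν 0 = 1 := by
  simp [genChoose]

lemma genChoose_one (ν : ℝ) : genChoose ν 1 = ν := by
  simp [genChoose]

lemma succ_mul_genChoose_succ (ν : ℝ) (j : ℕ) :
    ((j : ℝ) + 1) * genChoose ν (j + 1) = (ν - j) * genChoose ν j := by
  rw [genChoose, genChoose, prod_range_succ, Nat.factorial_succ]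
  push_cast
  field_simp

lemma genChoose_mul_harmonic_succ (ν : ℝ) (j : ℕ) (hj : ν ≠ j) :
    ((j : ℝ) + 1) * (genChoose ν (j + 1) * ∑ i ∈ range (j + 1), 1 / (ν - i)) =
      (ν - j) * (genChoose ν j * ∑ i ∈ range j, 1 / (ν - i)) + genChoose ν j := by
  have hνj : ν - j ≠ 0 := sub_ne_zero.mpr hj
  rw [← mul_assoc, succ_mul_genChoose_succ, sum_range_succ]
  field_simp

noncomputable def altChooseSum (ν : ℝ) (n : ℕ) : ℝ :=
  ∑ p ∈ antidiagonal n, genChoose ν p.2 * (-1) ^ p.1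

lemma altChooseSum_add_succ (ν : ℝ) (n : ℕ) :
    altChooseSum ν n + altChooseSum ν (n + 1) = genChoose ν (n + 1) := by
  simp [altChooseSum, Nat.sum_antidiagonal_succ, pow_succ]

/-- The coefficient of `x ^ (n + 1)` in `(1 + x) ^ ν * log (1 + x)`. -/
noncomputable def chooseLogCoeff (ν : ℝ) (n : ℕ) : ℝ :=
  ∑ p ∈ antidiagonal n, genChoose ν p.2 * (-1) ^ p.1 / (p.1 + 1)

lemma chooseLogCoeff_succ (ν : ℝ) (n : ℕ) :
    ((n : ℝ) + 2) * chooseLogCoeff ν (n + 1) =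
      (ν - n - 1) * chooseLogCoeff ν n + genChoose ν (n + 1) := by
  have split : ((n : ℝ) + 2) * chooseLogCoeff ν (n + 1) =
      ∑ p ∈ antidiagonal (n + 1), (p.2 : ℝ) * genChoose ν p.2 * (-1) ^ p.1 / (p.1 + 1) +
        altChooseSum ν (n + 1) := by
    rw [chooseLogCoeff, altChooseSum, mul_sum, ← sum_add_distrib]
    refine sum_congr rfl fun p hp => ?_
    have hsum : (n : ℝ) + 2 = p.2 + (p.1 + 1) := by
      rw [HasAntidiagonal.mem_antidiagonal] at hp
      exact_mod_cast (by omega : n + 2 = p.2 + (p.1 + 1))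
    rw [hsum]
    field_simp
  have shift : ∑ p ∈ antidiagonal (n + 1), (p.2 : ℝ) * genChoose ν p.2 * (-1) ^ p.1 / (p.1 + 1) =
      (ν - n - 1) * chooseLogCoeff ν n + altChooseSum ν n := by
    rw [Nat.sum_antidiagonal_succ', chooseLogCoeff, altChooseSum, mul_sum, ← sum_add_distrib]
    simp only [Nat.cast_zero, zero_mul, zero_div, zero_add]
    refine sum_congr rfl fun p hp => ?_
    have hdiff : ν - p.2 = (ν - n - 1) + (p.1 + 1) := by
      rw [HasAntidiagonal.mem_antidiagonal] at hp
      have : (p.1 : ℝ) + p.2 = n := by exact_mod_cast hp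
      linarith
    push_cast
    rw [succ_mul_genChoose_succ, hdiff]
    field_simp
  rw [split, shift]
  linarith [altChooseSum_add_succ ν n]

lemma chooseLogCoeff_eq (ν : ℝ) (n : ℕ) (hν : ∀ i ≤ n, ν ≠ i) :
    chooseLogCoeff ν n = genChoose ν (n + 1) * ∑ i ∈ range (n + 1), 1 / (ν - i) := by
  induction n with
  | zero =>
    have hν0 : ν ≠ 0 := by simpa using hν 0 le_rfl
    simp [chooseLogCoeff, genChoose_zero, genChoose_one, hν0]
  | succ n ih =>
    refine mul_left_cancel₀ (by positivity : (n : ℝ) + 2 ≠ 0) ?_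
    rw [chooseLogCoeff_succ, ih fun i hi => hν i (by omega)]
    have := genChoose_mul_harmonic_succ ν (n + 1) (hν (n + 1) le_rfl)
    push_cast at this ⊢
    linear_combination -this

lemma sum_Icc_eq_chooseLogCoeff (ν : ℝ) (n : ℕ) :
    ∑ m ∈ Icc 1 (n + 1), genChoose ν (n + 1 - m) * (-1 : ℝ) ^ (m - 1) / (m : ℝ) =
      chooseLogCoeff ν n := by
  rw [chooseLogCoeff, Nat.sum_antidiagonal_eq_sum_range_succ_mk, ← Ico_add_one_right_eq_Icc,
    sum_Ico_eq_sum_range]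
  refine sum_congr (by simp) fun k _ => ?_
  simp [add_comm]

theorem binomial_harmonic_identity_general (z : ℕ) (ν : ℝ) (hν : (z : ℝ) - 1 < ν) :
    ∑ m ∈ Finset.Icc 1 z, genChoose ν (z - m) * (-1 : ℝ) ^ (m - 1) / (m : ℝ) =
      genChoose ν z * ∑ i ∈ Finset.range z, 1 / (ν - (i : ℝ)) := by
  cases z with
  | zero => simp
  | succ n =>
    rw [sum_Icc_eq_chooseLogCoeff]
    refine chooseLogCoeff_eq ν n fun i hi => ?_
    have hi' : (i : ℝ) ≤ n := by exact_mod_cast hi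
    push_cast at hν
    exact (by linarith : (i : ℝ) < ν).ne'

theorem binomial_harmonic_identity (z : ℕ) (hz : 1 ≤ z) (ν : ℝ) (hν : (z : ℝ) - 1 < ν) :
    ∑ m ∈ Finset.Icc 1 z, genChoose ν (z - m) * (-1 : ℝ) ^ (m - 1) / (m : ℝ) =
      genChoose ν z * ∑ i ∈ Finset.range z, 1 / (ν - (i : ℝ)) :=
  binomial_harmonic_identity_general z ν hν
end

section
/- For every real r > 0 and every n ∈ ℕ with n ≥ 1, every complex root of the polynomial B_{n,r}(x) = Σ_{j=0}^n ⦃n,j⦄_r · x^j is a real negative number. (In particular, B_{n,r} has n real negative roots counted with multiplicity.) -/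
open Finset Filter MeasureTheory

open Polynomial Topology Real

/-!
For `x < 0` put `w_P(x) = (-x)^r e^x P(x)`. Then `w_P'(x) = -(-x)^(r-1) e^x Q(x)` with
`Q = x P' + (x + r) P`, and the recurrence of the r-Stirling numbers says exactly that
`B_{n+1,r} = x B_{n,r}' + (x + r) B_{n,r}`. Since `r > 0`, `w_P` tends to `0` at `-∞` and at `0⁻`
and vanishes at the negative roots of `P`; Rolle's theorem on the `k + 1` intervals cut out of
`(-∞, 0)` by the `k` distinct negative roots of `P` gives `k + 1` distinct negative roots of `Q`.
Inductively `B_{n,r}` has `n` distinct negative roots, which are then all its complex roots.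
-/

theorem exists_hasDerivAt_eq_zero_Iio {f f' : ℝ → ℝ} {b l : ℝ}
    (hbot : Tendsto f atBot (𝓝 l)) (hb : Tendsto f (𝓝[<] b) (𝓝 l))
    (hf : ∀ x < b, HasDerivAt f (f' x) x) : ∃ c < b, f' c = 0 := by
  -- the substitution `x = b + log t` reduces this to Rolle's theorem on `(0, 1)`
  have hlt : ∀ t ∈ Set.Ioo (0 : ℝ) 1, b + log t < b := fun t ht => by
    linarith [log_neg ht.1 ht.2]
  have h0 : Tendsto (fun t => b + log t) (𝓝[>] 0) atBot :=
    tendsto_atBot_add_const_left _ b tendsto_log_nhdsGT_zero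
  have h1 : Tendsto (fun t => b + log t) (𝓝[<] 1) (𝓝[<] b) := by
    refine tendsto_nhdsWithin_iff.2 ⟨?_, ?_⟩
    · simpa using ((continuousAt_log one_ne_zero).tendsto.const_add b).mono_left
        nhdsWithin_le_nhds
    · filter_upwards [Ioo_mem_nhdsLT zero_lt_one] using hlt
  obtain ⟨t, ht, hzero⟩ := exists_hasDerivAt_eq_zero' zero_lt_one (hbot.comp h0) (hb.comp h1)
    fun t ht => (hf _ (hlt t ht)).comp t ((hasDerivAt_log ht.1.ne').const_add b)
  exact ⟨b + log t, hlt t ht, by simpa [ht.1.ne'] using hzero⟩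

noncomputable def expWeight (r : ℝ) (P : ℝ[X]) (x : ℝ) : ℝ := (-x) ^ r * exp x * P.eval x

noncomputable def bellStep (r : ℝ) (P : ℝ[X]) : ℝ[X] := X * derivative P + (X + C r) * P

section
variable {r : ℝ} (P : ℝ[X])

theorem hasDerivAt_expWeight {x : ℝ} (hx : x < 0) :
    HasDerivAt (expWeight r P)
      (-((-x) ^ (r - 1) * exp x * (bellStep r P).eval x)) x := by
  have hpos : 0 < -x := by linarith
  have hpow : HasDerivAt (fun y : ℝ => (-y) ^ r) (-(r * (-x) ^ (r - 1))) x := by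
    simpa using ((hasDerivAt_id x).neg.rpow_const (p := r) (Or.inl hpos.ne'))
  have hsplit : (-x) ^ r = (-x) ^ (r - 1) * (-x) := by
    rw [← rpow_add_one hpos.ne', sub_add_cancel]
  refine ((hpow.mul (hasDerivAt_exp x)).mul (P.hasDerivAt x)).congr_deriv ?_
  simp only [bellStep, eval_add, eval_mul, eval_X, eval_C, Pi.mul_apply, hsplit]
  ring

theorem tendsto_expWeight_atBot : Tendsto (expWeight r P) atBot (𝓝 0) := by
  suffices h : Tendsto (fun y => expWeight r P (-y)) atTop (𝓝 0) by
    simpa [Function.comp_def] using h.comp tendsto_neg_atBot_atTop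
  have hterm (j : ℕ) : Tendsto (fun y : ℝ => P.coeff j * (-1) ^ j * (y ^ (r + j) * exp (-y)))
      atTop (𝓝 0) := by
    simpa using (tendsto_rpow_mul_exp_neg_mul_atTop_nhds_zero (r + j) 1 one_pos).const_mul
      (P.coeff j * (-1) ^ j)
  have hsum := tendsto_finsetSum (range (P.natDegree + 1)) fun j _ => hterm j
  rw [Finset.sum_const_zero] at hsum
  refine hsum.congr' ?_
  filter_upwards [eventually_gt_atTop 0] with y hy
  rw [expWeight, neg_neg, eval_eq_sum_range, Finset.mul_sum]
  refine Finset.sum_congr rfl fun j _ => ?_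
  rw [rpow_add hy, rpow_natCast, neg_pow]
  ring

theorem tendsto_expWeight_nhdsLT_zero (hr : 0 < r) :
    Tendsto (expWeight r P) (𝓝[<] 0) (𝓝 0) := by
  have hcont : ContinuousAt (expWeight r P) 0 :=
    (((continuous_neg.rpow_const fun _ => Or.inr hr.le).mul continuous_exp).mul
      P.continuous).continuousAt
  simpa [expWeight, zero_rpow hr.ne'] using hcont.tendsto.mono_left nhdsWithin_le_nhds

theorem tendsto_expWeight_of_isRoot {a : ℝ} (ha : a < 0) (hroot : P.IsRoot a) :
    Tendsto (expWeight r P) (𝓝 a) (𝓝 0) := by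
  simpa [expWeight, hroot.eq_zero] using
    (hasDerivAt_expWeight P ha).continuousAt.tendsto

theorem bellStep_ne_zero (hP : P ≠ 0) : bellStep r P ≠ 0 := by
  intro h
  have hcoeff := congrArg (·.coeff (P.natDegree + 1)) h
  simp [bellStep, coeff_X_mul, coeff_derivative, add_mul, coeff_C_mul] at hcoeff
  exact hP hcoeff

end

noncomputable def negRoots (p : ℝ[X]) : Finset ℝ := p.roots.toFinset.filter (· < 0)

theorem mem_negRoots {p : ℝ[X]} {x : ℝ} : x ∈ negRoots p ↔ p ≠ 0 ∧ p.IsRoot x ∧ x < 0 := by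
  simp [negRoots, and_assoc]

theorem nonpos_of_mem_insert_negRoots {p : ℝ[X]} {x : ℝ} (hx : x ∈ insert 0 (negRoots p)) :
    x ≤ 0 := by
  rcases mem_insert.1 hx with rfl | hx
  · rfl
  · exact (mem_negRoots.1 hx).2.2.le

theorem exists_neg_eq_of_aeval_eq_zero {p : ℝ[X]} (hp : p ≠ 0)
    (hcard : p.natDegree ≤ (negRoots p).card) {z : ℂ} (hz : aeval z p = 0) :
    ∃ x : ℝ, x < 0 ∧ z = x := by
  have hsub : negRoots p ⊆ p.roots.toFinset := filter_subset _ _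
  have hle := (card_le_card hsub).trans (Multiset.toFinset_card_le p.roots)
  have hroots : p.roots.card = p.natDegree := le_antisymm (card_roots' p) (hcard.trans hle)
  have hall : p.roots.toFinset = negRoots p :=
    (eq_of_subset_of_card_le hsub (p.roots.toFinset_card_le.trans (hroots.trans_le hcard))).symm
  have hz' : z ∈ p.aroots ℂ := mem_aroots.2 ⟨hp, hz⟩
  rw [aroots_def, ← roots_map_of_injective_of_card_eq_natDegree (algebraMap ℝ ℂ).injective hroots,
    Multiset.mem_map] at hz'
  obtain ⟨x, hx, rfl⟩ := hz'
  exact ⟨x, (mem_negRoots.1 (hall ▸ Multiset.mem_toFinset.2 hx)).2.2, rfl⟩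

section
variable {r : ℝ} {P : ℝ[X]}

theorem tendsto_expWeight_nhdsLT (hr : 0 < r) {b : ℝ} (hb : b ∈ insert 0 (negRoots P)) :
    Tendsto (expWeight r P) (𝓝[<] b) (𝓝 0) := by
  rcases mem_insert.1 hb with rfl | hb
  · exact tendsto_expWeight_nhdsLT_zero P hr
  · obtain ⟨-, hroot, hneg⟩ := mem_negRoots.1 hb
    exact (tendsto_expWeight_of_isRoot P hneg hroot).mono_left nhdsWithin_le_nhds

theorem isRoot_bellStep_of_deriv_eq_zero {c : ℝ} (hc : c < 0)
    (h : -((-c) ^ (r - 1) * exp c * (bellStep r P).eval c) = 0) : (bellStep r P).IsRoot c := by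
  have : (-c) ^ (r - 1) ≠ 0 := (rpow_pos_of_pos (by linarith) _).ne'
  simpa [this, exp_ne_zero] using h

theorem exists_isRoot_bellStep_lt (hr : 0 < r) {b : ℝ} (hb : b ∈ insert 0 (negRoots P)) :
    ∃ c < b, (bellStep r P).IsRoot c := by
  have hb0 := nonpos_of_mem_insert_negRoots hb
  obtain ⟨c, hc, hc0⟩ := exists_hasDerivAt_eq_zero_Iio (tendsto_expWeight_atBot P)
    (tendsto_expWeight_nhdsLT hr hb) fun x hx => hasDerivAt_expWeight P (hx.trans_le hb0)
  exact ⟨c, hc, isRoot_bellStep_of_deriv_eq_zero (hc.trans_le hb0) hc0⟩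

theorem exists_isRoot_bellStep_Ioo (hr : 0 < r) {a b : ℝ} (ha : a ∈ negRoots P)
    (hb : b ∈ insert 0 (negRoots P)) (hab : a < b) :
    ∃ c ∈ Set.Ioo a b, (bellStep r P).IsRoot c := by
  have hb0 := nonpos_of_mem_insert_negRoots hb
  obtain ⟨-, hroot, hneg⟩ := mem_negRoots.1 ha
  obtain ⟨c, hc, hc0⟩ := exists_hasDerivAt_eq_zero' hab
    ((tendsto_expWeight_of_isRoot P hneg hroot).mono_left nhdsWithin_le_nhds)
    (tendsto_expWeight_nhdsLT hr hb) fun x hx => hasDerivAt_expWeight P (hx.2.trans_le hb0)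
  exact ⟨c, hc, isRoot_bellStep_of_deriv_eq_zero (hc.2.trans_le hb0) hc0⟩

end

theorem card_negRoots_bellStep {r : ℝ} (hr : 0 < r) {P : ℝ[X]} (hP : P ≠ 0) :
    (negRoots P).card + 1 ≤ (negRoots (bellStep r P)).card := by
  set s := insert 0 (negRoots P)
  have hs : s.Nonempty := insert_nonempty _ _
  have hmem {c : ℝ} (hc : (bellStep r P).IsRoot c) (hc0 : c < 0) : c ∈ negRoots (bellStep r P) :=
    mem_negRoots.2 ⟨bellStep_ne_zero P hP, hc, hc0⟩
  obtain ⟨c, hc, hroot⟩ := exists_isRoot_bellStep_lt hr (s.min'_mem hs)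
  have hcs {b : ℝ} (hb : b ∈ s) : c < b := hc.trans_le (s.min'_le b hb)
  -- `c - 1` plays the role of `-∞`: between any two consecutive points of `insert (c - 1) s`
  -- lies a root of `bellStep r P`, by Rolle's theorem or because it is `c`.
  have hcard : (insert (c - 1) s).card = (negRoots P).card + 2 := by
    rw [card_insert_of_notMem fun h => by linarith [hcs h],
      card_insert_of_notMem fun h => (mem_negRoots.1 h).2.2.false]
  have := card_le_of_interleaved (s := insert (c - 1) s) (t := negRoots (bellStep r P))
    fun x hx y hy hxy _ => by
      have hxc : c - 1 ≤ x := by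
        rcases mem_insert.1 hx with rfl | hx
        · rfl
        · linarith [hcs hx]
      have hy : y ∈ s := (mem_insert.1 hy).resolve_left (hxc.trans_lt hxy).ne'
      have hy0 := nonpos_of_mem_insert_negRoots hy
      rcases mem_insert.1 hx with rfl | hx
      · exact ⟨c, hmem hroot ((hcs hy).trans_le hy0), by linarith, hcs hy⟩
      · obtain ⟨z, hz, hzroot⟩ := exists_isRoot_bellStep_Ioo hr
          ((mem_insert.1 hx).resolve_left (hxy.trans_le hy0).ne) hy hxy
        exact ⟨z, hmem hzroot (hz.2.trans_le hy0), hz⟩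
  omega

theorem stirSec_eq_zero_of_lt_s9 (r : ℝ) : ∀ {n k : ℕ}, n < k → stirSec r n k = 0
  | 0, k + 1, _ => rfl
  | n + 1, k + 1, h => by
    rw [stirSec, stirSec_eq_zero_of_lt_s9 r (by omega : n < k + 1),
      stirSec_eq_zero_of_lt_s9 r (by omega : n < k), mul_zero, add_zero]

theorem stirSec_self (r : ℝ) : ∀ n : ℕ, stirSec r n n = 1
  | 0 => rfl
  | n + 1 => by rw [stirSec, stirSec_eq_zero_of_lt_s9 r n.lt_succ_self, stirSec_self r n]; ring

noncomputable def stirSecPoly (r : ℝ) (n : ℕ) : ℝ[X] :=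
  ∑ j ∈ range (n + 1), C (stirSec r n j) * X ^ j

theorem coeff_stirSecPoly (r : ℝ) (n k : ℕ) : (stirSecPoly r n).coeff k = stirSec r n k := by
  simp only [stirSecPoly, finsetSum_coeff, coeff_C_mul_X_pow, sum_ite_eq, mem_range]
  split_ifs with h
  · rfl
  · exact (stirSec_eq_zero_of_lt_s9 r (by omega)).symm

theorem natDegree_stirSecPoly_le (r : ℝ) (n : ℕ) : (stirSecPoly r n).natDegree ≤ n :=
  natDegree_le_iff_coeff_eq_zero.2 fun _ hk => by
    rw [coeff_stirSecPoly, stirSec_eq_zero_of_lt_s9 r (by exact_mod_cast hk)]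

theorem stirSecPoly_ne_zero (r : ℝ) (n : ℕ) : stirSecPoly r n ≠ 0 := fun h => by
  simpa [coeff_stirSecPoly, stirSec_self] using congrArg (·.coeff n) h

theorem stirSecPoly_succ (r : ℝ) (n : ℕ) :
    stirSecPoly r (n + 1) = bellStep r (stirSecPoly r n) := by
  ext (_ | k)
  · simp [bellStep, coeff_stirSecPoly, mul_coeff_zero, stirSec]
  · simp only [bellStep, coeff_add, coeff_X_mul, coeff_derivative, add_mul, coeff_C_mul,
      coeff_stirSecPoly, stirSec]
    ring

theorem aeval_stirSecPoly (r : ℝ) (n : ℕ) (z : ℂ) :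
    aeval z (stirSecPoly r n) = ∑ j ∈ range (n + 1), ((stirSec r n j : ℝ) : ℂ) * z ^ j := by
  simp [stirSecPoly]

theorem card_negRoots_stirSecPoly {r : ℝ} (hr : 0 < r) (n : ℕ) :
    n ≤ (negRoots (stirSecPoly r n)).card := by
  induction n with
  | zero => exact Nat.zero_le _
  | succ n ih =>
    rw [stirSecPoly_succ]
    exact (Nat.succ_le_succ ih).trans (card_negRoots_bellStep hr (stirSecPoly_ne_zero r n))

theorem stirSec_poly_roots_real_neg_general (r : ℝ) (hr : 0 < r) (n : ℕ)
    (z : ℂ) (hz : ∑ j ∈ Finset.range (n + 1), ((stirSec r n j : ℝ) : ℂ) * z ^ j = 0) :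
    ∃ x : ℝ, x < 0 ∧ z = (x : ℂ) :=
  exists_neg_eq_of_aeval_eq_zero (stirSecPoly_ne_zero r n)
    ((natDegree_stirSecPoly_le r n).trans (card_negRoots_stirSecPoly hr n))
    (by rwa [aeval_stirSecPoly])

theorem stirSec_poly_roots_real_neg (r : ℝ) (hr : 0 < r) (n : ℕ) (hn : 1 ≤ n)
    (z : ℂ) (hz : ∑ j ∈ Finset.range (n + 1), ((stirSec r n j : ℝ) : ℂ) * z ^ j = 0) :
    ∃ x : ℝ, x < 0 ∧ z = (x : ℂ) :=
  stirSec_poly_roots_real_neg_general r hr n z hz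
end

section
/- For every real r ≥ 0 and every n ∈ ℕ with n ≥ 1, the sequence (⦃n,k⦄_r)_{k=0}^n of r-Stirling numbers of the second kind is strictly log-concave: for every k ∈ {1,...,n-1} one has ⦃n,k⦄_r² > ⦃n,k+1⦄_r · ⦃n,k-1⦄_r. -/
open Finset Filter MeasureTheory

/-!
Row `n + 1` arises from row `n` by `y_k = (k + r) x_k + x_{k-1}`. Expanding `y_k² - y_{k+1} y_{k-1}`
expresses it as `(k + r)² (x_k² - x_{k+1} x_{k-1})` plus terms that are nonnegative by
log-concavity of row `n` and by its four-term consequence `x_{k+1} x_{k-2} ≤ x_k x_{k-1}` (valid as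
the row has no internal zeros), so log-concavity, and strict log-concavity on `1 ≤ k ≤ n - 1`,
propagate from row to row; the strict inequality starts at `k = n - 1` from `x_n = 1`, `x_{n+1} = 0`.
-/

def IsLogConcave (x : ℕ → ℝ) : Prop :=
  ∀ i, x (i + 2) * x i ≤ x (i + 1) ^ 2

theorem IsLogConcave.outer_mul_le_inner_mul {x : ℕ → ℝ} (hlc : IsLogConcave x)
    (hx : ∀ i, 0 ≤ x i) (hz : ∀ i, x (i + 1) = 0 → x (i + 2) = 0) (j : ℕ) :
    x (j + 3) * x j ≤ x (j + 2) * x (j + 1) := by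
  by_cases h1 : x (j + 1) = 0
  · simp [hz (j + 1) (hz j h1), h1]
  by_cases h2 : x (j + 2) = 0
  · simp [hz (j + 1) h2, h2]
  have hpos : 0 < x (j + 2) * x (j + 1) :=
    mul_pos ((hx _).lt_of_ne' h2) ((hx _).lt_of_ne' h1)
  refine le_of_mul_le_mul_right ?_ hpos
  calc x (j + 3) * x j * (x (j + 2) * x (j + 1))
      = (x (j + 3) * x (j + 1)) * (x (j + 2) * x j) := by ring
    _ ≤ x (j + 2) ^ 2 * x (j + 1) ^ 2 :=
      mul_le_mul (hlc (j + 1)) (hlc j) (mul_nonneg (hx _) (hx _)) (sq_nonneg _)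
    _ = x (j + 2) * x (j + 1) * (x (j + 2) * x (j + 1)) := by ring

namespace stirSec

theorem succ_zero (r : ℝ) (n : ℕ) : stirSec r (n + 1) 0 = r * stirSec r n 0 := rfl

theorem succ_succ (r : ℝ) (n k : ℕ) :
    stirSec r (n + 1) (k + 1) = ((k : ℝ) + 1 + r) * stirSec r n (k + 1) + stirSec r n k := rfl

theorem eq_zero_of_lt (r : ℝ) {n k : ℕ} (h : n < k) : stirSec r n k = 0 := by
  induction n generalizing k with
  | zero => obtain ⟨k, rfl⟩ := Nat.exists_eq_succ_of_ne_zero h.ne'; rfl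
  | succ n ih =>
    obtain ⟨k, rfl⟩ := Nat.exists_eq_succ_of_ne_zero (by omega : k ≠ 0)
    rw [succ_succ, ih (by omega : n < k + 1), ih (by omega : n < k)]
    ring

@[simp]
theorem self (r : ℝ) (n : ℕ) : stirSec r n n = 1 := by
  induction n with
  | zero => rfl
  | succ n ih => rw [succ_succ, ih, eq_zero_of_lt r (Nat.lt_succ_self n)]; ring

theorem nonneg {r : ℝ} (hr : 0 ≤ r) (n k : ℕ) : 0 ≤ stirSec r n k := by
  induction n generalizing k with
  | zero => cases k <;> simp [stirSec]
  | succ n ih =>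
    cases k with
    | zero => exact mul_nonneg hr (ih 0)
    | succ k => have := ih (k + 1); have := ih k; simp only [succ_succ]; positivity

theorem pos {r : ℝ} (hr : 0 ≤ r) {n k : ℕ} (hk : 1 ≤ k) (hkn : k ≤ n) : 0 < stirSec r n k := by
  induction n generalizing k with
  | zero => omega
  | succ n ih =>
    obtain ⟨k, rfl⟩ := Nat.exists_eq_succ_of_ne_zero (by omega : k ≠ 0)
    rw [succ_succ]
    rcases Nat.eq_or_lt_of_le hkn with h | h
    · obtain rfl : k = n := by omega
      rw [eq_zero_of_lt r (Nat.lt_succ_self k), self]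
      norm_num
    · have := ih (by omega : 1 ≤ k + 1) (by omega)
      have := nonneg hr n k
      positivity

theorem eq_zero_of_succ_eq_zero {r : ℝ} (hr : 0 ≤ r) {n i : ℕ} (h : stirSec r n (i + 1) = 0) :
    stirSec r n (i + 2) = 0 := by
  refine eq_zero_of_lt r ?_
  by_contra! hn
  exact (pos hr (by omega) (by omega : i + 1 ≤ n)).ne' h

/-- With `x = stirSec r n` and `a = k + r`, the entries of row `n + 1` are `y₀ = a x₀ + c`,
`y₁ = (a + 1) x₁ + x₀`, `y₂ = (a + 2) x₂ + x₁` with `c = x₋₁` (or `0` when `k = 0`), and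
`y₁² - y₂ y₀ = (a + 1)² (x₁² - x₂ x₀) + x₂ x₀ + (a + 2) (x₁ x₀ - x₂ c) + (x₀² - x₁ c)`. -/
theorem sq_sub_mul_le_succ {r : ℝ} (hr : 0 ≤ r) {n : ℕ} (hlc : IsLogConcave (stirSec r n))
    (k : ℕ) :
    ((k : ℝ) + 1 + r) ^ 2 * (stirSec r n (k + 1) ^ 2 - stirSec r n (k + 2) * stirSec r n k) ≤
      stirSec r (n + 1) (k + 1) ^ 2 - stirSec r (n + 1) (k + 2) * stirSec r (n + 1) k := by
  obtain ⟨c, hy₀, hc₁, hc₂⟩ : ∃ c : ℝ,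
      stirSec r (n + 1) k = ((k : ℝ) + r) * stirSec r n k + c ∧
      stirSec r n (k + 1) * c ≤ stirSec r n k ^ 2 ∧
      stirSec r n (k + 2) * c ≤ stirSec r n (k + 1) * stirSec r n k := by
    cases k with
    | zero =>
      refine ⟨0, by rw [succ_zero]; simp, by simp [sq_nonneg], ?_⟩
      simpa using mul_nonneg (nonneg hr n 1) (nonneg hr n 0)
    | succ m =>
      refine ⟨stirSec r n m, by rw [succ_succ]; push_cast; ring, hlc m, ?_⟩
      exact hlc.outer_mul_le_inner_mul (nonneg hr n) (fun i => eq_zero_of_succ_eq_zero hr) m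
  have hy₂ : stirSec r (n + 1) (k + 2) =
      ((k : ℝ) + 2 + r) * stirSec r n (k + 2) + stirSec r n (k + 1) := by
    rw [succ_succ]; push_cast; ring
  rw [succ_succ, hy₂, hy₀]
  have hc₂' := mul_le_mul_of_nonneg_left hc₂ (by positivity : 0 ≤ (k : ℝ) + 2 + r)
  linear_combination mul_nonneg (nonneg hr n (k + 2)) (nonneg hr n k) + hc₂' + hc₁

theorem isLogConcave {r : ℝ} (hr : 0 ≤ r) (n : ℕ) : IsLogConcave (stirSec r n) := by
  induction n with
  | zero => intro k; simp [eq_zero_of_lt r (Nat.succ_pos (k + 1)), sq_nonneg]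
  | succ n ih =>
    intro k
    have := sq_sub_mul_le_succ hr ih k
    have := mul_nonneg (sq_nonneg ((k : ℝ) + 1 + r)) (sub_nonneg.2 (ih k))
    linarith

theorem mul_lt_sq {r : ℝ} (hr : 0 ≤ r) {n k : ℕ} (hkn : k + 1 ≤ n) :
    stirSec r n (k + 2) * stirSec r n k < stirSec r n (k + 1) ^ 2 := by
  induction n, hkn using Nat.le_induction with
  | base => rw [eq_zero_of_lt r (Nat.lt_succ_self (k + 1)), self]; norm_num
  | succ n hkn ih =>
    have := sq_sub_mul_le_succ hr (isLogConcave hr n) k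
    have := mul_pos (by positivity : 0 < ((k : ℝ) + 1 + r) ^ 2) (sub_pos.2 ih)
    linarith

end stirSec

theorem stirSec_strict_log_concave_general (r : ℝ) (hr : 0 ≤ r) (n : ℕ)
    (k : ℕ) (hk1 : 1 ≤ k) (hk2 : k + 1 ≤ n) :
    stirSec r n (k + 1) * stirSec r n (k - 1) < (stirSec r n k) ^ 2 := by
  obtain ⟨m, rfl⟩ := Nat.exists_eq_add_of_le' hk1
  exact stirSec.mul_lt_sq hr (by omega : m + 1 ≤ n)

theorem stirSec_strict_log_concave (r : ℝ) (hr : 0 ≤ r) (n : ℕ) (hn : 1 ≤ n)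
    (k : ℕ) (hk1 : 1 ≤ k) (hk2 : k + 1 ≤ n) :
    stirSec r n (k + 1) * stirSec r n (k - 1) < (stirSec r n k) ^ 2 :=
  stirSec_strict_log_concave_general r hr n k hk1 hk2
end

section
/- For any admissible triple of parameters (n,k,r), the r-Lah distribution is log-concave: for all i ∈ {k+1, ..., n-1}, P[Lah(n,k)_r = i]² ≥ P[Lah(n,k)_r = i-1]·P[Lah(n,k)_r = i+1]; equivalently, (⌈n,i⌉_r·⦃i,k⦄_r)² ≥ (⌈n,i-1⌉_r·⦃i-1,k⦄_r)·(⌈n,i+1⌉_r·⦃i+1,k⦄_r). -/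
open Finset Filter MeasureTheory

/-!
The row `j ↦ ⌈n,j⌉_r` is the coefficient sequence of `∏_{i<n} (X + i + r)`, and the column
`m ↦ ⦃m,k⦄_r` is that of `X^k / ∏_{i≤k} (1 - (i + r) X)`. Multiplying a generating function by
`X + c` or by `X / (1 - x X)` with `c, x ≥ 0` preserves the Pólya frequency property PF₂, so rows
and columns are PF₂. PF₂ sequences are closed under pointwise products, and the r-Lah distribution
is a pointwise product of a row and a column up to normalisation; PF₂ implies log-concavity.
-/

/-- Pólya frequency of order 2: nonnegative, with nonnegative 2 × 2 minors of the Toeplitz matrix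
`(a (i - j))`. For sequences without internal zeros this is the same as log-concavity. -/
def IsPF2 (a : ℕ → ℝ) : Prop :=
  (∀ j, 0 ≤ a j) ∧ ∀ j l, j ≤ l → a j * a (l + 2) ≤ a (j + 1) * a (l + 1)

def mulXAdd (c : ℝ) (a : ℕ → ℝ) : ℕ → ℝ
  | 0 => c * a 0
  | m + 1 => c * a (m + 1) + a m

/-- Coefficients of `X · A(X) / (1 - x X)`, where `A` is the generating function of `a`. -/
def geomConv (x : ℝ) (a : ℕ → ℝ) : ℕ → ℝ
  | 0 => 0
  | m + 1 => x * geomConv x a m + a m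

namespace IsPF2

variable {a b : ℕ → ℝ}

theorem mul_le_sq (ha : IsPF2 a) (j : ℕ) : a j * a (j + 2) ≤ a (j + 1) ^ 2 := by
  simpa [sq] using ha.2 j j le_rfl

theorem mul (ha : IsPF2 a) (hb : IsPF2 b) : IsPF2 (fun j => a j * b j) := by
  refine ⟨fun j => mul_nonneg (ha.1 j) (hb.1 j), fun j l hjl => ?_⟩
  calc a j * b j * (a (l + 2) * b (l + 2)) = (a j * a (l + 2)) * (b j * b (l + 2)) := by ring
    _ ≤ (a (j + 1) * a (l + 1)) * (b (j + 1) * b (l + 1)) :=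
        mul_le_mul (ha.2 j l hjl) (hb.2 j l hjl) (mul_nonneg (hb.1 _) (hb.1 _))
          (mul_nonneg (ha.1 _) (ha.1 _))
    _ = a (j + 1) * b (j + 1) * (a (l + 1) * b (l + 1)) := by ring

theorem div_const (ha : IsPF2 a) {c : ℝ} (hc : 0 ≤ c) : IsPF2 (fun j => a j / c) := by
  refine ⟨fun j => div_nonneg (ha.1 j) hc, fun j l hjl => ?_⟩
  simp only [div_mul_div_comm]
  exact div_le_div_of_nonneg_right (ha.2 j l hjl) (mul_nonneg hc hc)

theorem pow {x : ℝ} (hx : 0 ≤ x) : IsPF2 (fun m => x ^ m) :=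
  ⟨fun m => pow_nonneg hx m, fun j l _ => le_of_eq (by ring)⟩

theorem mulXAdd (ha : IsPF2 a) {c : ℝ} (hc : 0 ≤ c) : IsPF2 (mulXAdd c a) := by
  obtain ⟨h0, h⟩ := ha
  refine ⟨fun m => ?_, fun j l hjl => ?_⟩
  · cases m with
    | zero => exact mul_nonneg hc (h0 0)
    | succ m => exact add_nonneg (mul_nonneg hc (h0 _)) (h0 m)
  rcases j with _ | j
  · simp only [_root_.mulXAdd]
    linarith [mul_le_mul_of_nonneg_left (h 0 l hjl) (mul_nonneg hc hc),
      mul_nonneg hc (mul_nonneg (h0 1) (h0 l)), mul_nonneg (h0 0) (h0 l)]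
  obtain ⟨l, rfl⟩ : ∃ l', l = l' + 1 := ⟨l - 1, by omega⟩
  have outer : a j * a (l + 3) ≤ a (j + 2) * a (l + 1) := by
    refine (h j (l + 1) (by omega)).trans ?_
    rcases (Nat.le_of_succ_le_succ hjl).eq_or_lt with rfl | hlt
    · exact le_of_eq (mul_comm _ _)
    · exact h (j + 1) l hlt
  simp only [_root_.mulXAdd]
  linarith [mul_le_mul_of_nonneg_left (h (j + 1) (l + 1) (by omega)) (mul_nonneg hc hc),
    mul_le_mul_of_nonneg_left outer hc, h j l (by omega)]

theorem geomConv_cross (ha : IsPF2 a) {x : ℝ} (hx : 0 ≤ x) {m n : ℕ} (hmn : m ≤ n) :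
    geomConv x a m * a (n + 1) ≤ geomConv x a (m + 1) * a n := by
  set b := _root_.geomConv x a
  induction m generalizing n with
  | zero =>
    simpa [b, _root_.geomConv] using mul_nonneg (ha.1 0) (ha.1 n)
  | succ m ih =>
    obtain ⟨n, rfl⟩ : ∃ n', n = n' + 1 := ⟨n - 1, by omega⟩
    calc b (m + 1) * a (n + 2) = x * (b m * a (n + 2)) + a m * a (n + 2) := by
          rw [show b (m + 1) = x * b m + a m from rfl]; ring
      _ ≤ x * (b (m + 1) * a (n + 1)) + a (m + 1) * a (n + 1) :=
          add_le_add (mul_le_mul_of_nonneg_left (ih (by omega : m ≤ n + 1)) hx)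
            (ha.2 m n (by omega))
      _ = b (m + 2) * a (n + 1) := by
          rw [show b (m + 2) = x * b (m + 1) + a (m + 1) from rfl]; ring

theorem geomConv (ha : IsPF2 a) {x : ℝ} (hx : 0 ≤ x) : IsPF2 (geomConv x a) := by
  set b := _root_.geomConv x a
  have hb : ∀ m, 0 ≤ b m := by
    intro m
    induction m with
    | zero => exact le_rfl
    | succ m ih => exact add_nonneg (mul_nonneg hx ih) (ha.1 m)
  refine ⟨hb, fun j l hjl => ?_⟩
  have step : ∀ l, j ≤ l → b j * b (l + 1) ≤ b (j + 1) * b l →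
      b j * b (l + 2) ≤ b (j + 1) * b (l + 1) := by
    intro l hjl hprev
    calc b j * b (l + 2) = x * (b j * b (l + 1)) + b j * a (l + 1) := by
          rw [show b (l + 2) = x * b (l + 1) + a (l + 1) from rfl]; ring
      _ ≤ x * (b (j + 1) * b l) + b (j + 1) * a l :=
          add_le_add (mul_le_mul_of_nonneg_left hprev hx) (ha.geomConv_cross hx hjl)
      _ = b (j + 1) * b (l + 1) := by
          rw [show b (l + 1) = x * b l + a l from rfl]; ring
  induction l, hjl using Nat.le_induction with
  | base => exact step j le_rfl (le_of_eq (mul_comm _ _))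
  | succ l hjl ih => exact step (l + 1) (by omega) ih

end IsPF2

theorem stirFir_succ_eq_mulXAdd (r : ℝ) (n : ℕ) :
    stirFir r (n + 1) = mulXAdd ((n : ℝ) + r) (stirFir r n) := by
  funext k
  cases k <;> rfl

theorem stirSec_zero_right (r : ℝ) (m : ℕ) : stirSec r m 0 = r ^ m := by
  induction m with
  | zero => rfl
  | succ m ih => rw [pow_succ, ← ih, mul_comm]; rfl

theorem stirSec_succ_right_eq_geomConv (r : ℝ) (k : ℕ) :
    (fun m => stirSec r m (k + 1)) = geomConv ((k : ℝ) + 1 + r) (fun m => stirSec r m k) := by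
  funext m
  induction m with
  | zero => rfl
  | succ m ih => rw [geomConv, ← ih]; rfl

theorem isPF2_stirFir {r : ℝ} (hr : 0 ≤ r) (n : ℕ) : IsPF2 (stirFir r n) := by
  induction n with
  | zero =>
    refine ⟨fun j => ?_, fun j l _ => by simp [stirFir]⟩
    cases j <;> simp [stirFir]
  | succ n ih =>
    rw [stirFir_succ_eq_mulXAdd]
    exact ih.mulXAdd (by positivity)

theorem isPF2_stirSec {r : ℝ} (hr : 0 ≤ r) (k : ℕ) : IsPF2 (fun m => stirSec r m k) := by
  induction k with
  | zero => simpa only [stirSec_zero_right] using IsPF2.pow hr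
  | succ k ih =>
    rw [stirSec_succ_right_eq_geomConv]
    exact ih.geomConv (by positivity)

theorem lahNum_nonneg {r : ℝ} (hr : 0 ≤ r) (n k : ℕ) : 0 ≤ lahNum r n k :=
  sum_nonneg fun j _ => mul_nonneg ((isPF2_stirFir hr n).1 j) ((isPF2_stirSec hr k).1 j)

theorem isPF2_lahPMF {r : ℝ} (hr : 0 ≤ r) (n k : ℕ) : IsPF2 (lahPMF r n k) :=
  ((isPF2_stirFir hr n).mul (isPF2_stirSec hr k)).div_const (lahNum_nonneg hr n k)

theorem rLah_log_concave_general (n k : ℕ) (r : ℝ) (hr : 0 ≤ r)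
    (i : ℕ) (hi1 : k + 1 ≤ i) :
    lahPMF r n k (i - 1) * lahPMF r n k (i + 1) ≤ (lahPMF r n k i) ^ 2 := by
  obtain ⟨i, rfl⟩ : ∃ i', i = i' + 1 := ⟨i - 1, by omega⟩
  simpa using (isPF2_lahPMF hr n k).mul_le_sq i

theorem rLah_log_concave (n k : ℕ) (r : ℝ) (hn : 1 ≤ n) (hk : k ≤ n) (hr : 0 ≤ r)
    (hmax : 0 < k ∨ 0 < r) (i : ℕ) (hi1 : k + 1 ≤ i) (hi2 : i + 1 ≤ n) :
    lahPMF r n k (i - 1) * lahPMF r n k (i + 1) ≤ (lahPMF r n k i) ^ 2 :=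
  rLah_log_concave_general n k r hr i hi1
end
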